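/- Invariance of the Lebesgue decomposition parts (established within the proof of Lemma 1.3). Let E be a measurable space, m a σ-finite measure on E, and κ : Kernel E E a Markov kernel such that for every finite measure μ on E with μ ≪ m one has μ.bind κ ≪ m. If μ* is a finite measure on E with μ*.bind κ = μ*, then both parts of the Lebesgue decomposition of μ* with respect to m are invariant: (m.withDensity (μ*.rnDeriv m)).bind κ = m.withDensity (μ*.rnDeriv m) and (μ*.singularPart m).bind κ = μ*.singularPart m. -/

import Mathlib

open MeasureTheory ProbabilityTheory

/-!
Write `μ = a + s` for the Lebesgue decomposition of an invariant finite measure `μ` with respect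
to `m`. Applying the kernel gives `κ ∘ₘ a + κ ∘ₘ s = a + s`, and `κ ∘ₘ a ≪ m`, so taking singular
parts shows that `s` is the singular part of `κ ∘ₘ s`. Hence `s ≤ κ ∘ₘ s`, and since a Markov
kernel preserves total mass, `κ ∘ₘ s = s`. Cancelling the finite measure `s` then gives
`κ ∘ₘ a = a`.
-/

namespace ProbabilityTheory.Kernel.Invariant

variable {α : Type*} [MeasurableSpace α] {κ : Kernel α α} {μ m : Measure α}

theorem singularPart [IsMarkovKernel κ] [IsFiniteMeasure μ] [SigmaFinite m]
    (hμ : Invariant κ μ) (hac : κ ∘ₘ m.withDensity (μ.rnDeriv m) ≪ m) :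
    Invariant κ (μ.singularPart m) := by
  have hsplit : κ ∘ₘ m.withDensity (μ.rnDeriv m) + κ ∘ₘ μ.singularPart m = μ := by
    rw [← Measure.comp_add, Measure.rnDeriv_add_singularPart, hμ.def]
  have hsing : (κ ∘ₘ μ.singularPart m).singularPart m = μ.singularPart m := by
    simpa only [Measure.singularPart_add, Measure.singularPart_eq_zero_of_ac hac, zero_add]
      using congrArg (·.singularPart m) hsplit
  have hle : μ.singularPart m ≤ κ ∘ₘ μ.singularPart m :=
    hsing.ge.trans (Measure.singularPart_le _ _)
  exact (Measure.eq_of_le_of_measure_univ_eq hle Measure.comp_apply_univ.symm).symm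

theorem withDensity_rnDeriv [μ.HaveLebesgueDecomposition m] [SigmaFinite μ]
    (hμ : Invariant κ μ) (hsing : Invariant κ (μ.singularPart m)) :
    Invariant κ (m.withDensity (μ.rnDeriv m)) := by
  rw [Invariant, ← Measure.add_left_inj (μ.singularPart m)]
  nth_rw 1 [← hsing.def]
  rw [← Measure.comp_add, Measure.rnDeriv_add_singularPart, hμ.def]

end ProbabilityTheory.Kernel.Invariant

/-- Invariance of the two parts of the Lebesgue decomposition of an invariant measure
(established within the proof of Lemma 1.3): if a Markov kernel preserves absolute continuity
w.r.t. a σ-finite measure `m` and `μ*` is a finite invariant measure, then the absolutely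
continuous part `m.withDensity (μ*.rnDeriv m)` and the singular part `μ*.singularPart m`
are both invariant. -/
theorem lebesgue_parts_invariant
    {E : Type*} [MeasurableSpace E] (m : Measure E) [SigmaFinite m]
    (κ : Kernel E E) [IsMarkovKernel κ]
    (hpres : ∀ μ : Measure E, IsFiniteMeasure μ → μ ≪ m → μ.bind ⇑κ ≪ m)
    (μs : Measure E) [IsFiniteMeasure μs]
    (hinv : μs.bind ⇑κ = μs) :
    (m.withDensity (μs.rnDeriv m)).bind ⇑κ = m.withDensity (μs.rnDeriv m) ∧
    (μs.singularPart m).bind ⇑κ = μs.singularPart m := by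
  have hμs : Kernel.Invariant κ μs := hinv
  have hsing : Kernel.Invariant κ (μs.singularPart m) :=
    hμs.singularPart (hpres _ inferInstance (withDensity_absolutelyContinuous m _))
  exact ⟨hμs.withDensity_rnDeriv hsing, hsing⟩
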